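/- arXiv:2305.10117 — 2 statements merged into one kernel-verified Lean document; each statement's English description precedes it below -/
import Mathlib

section
/- Assume |w_b| + |w_f| < 1, and let f be a solution of the Collatz functional equation for (k, w_b, w_f) with coefficients (aₙ). If aₙ ≠ 0 for a positive integer n, then n lies in the Collatz orbit of k, i.e. Col^[i](k) = n for some i ≥ 0. -/
/-!
Comparing coefficients of `x^(2n)` in the functional equation gives
`aₙ = w_b a_{2n} + w_f [n ≡ 4 mod 6] a_{(n-1)/3} + [n = k]`. The indices `2n` and `(n-1)/3` are
exactly the Collatz preimages of `n`, so off the orbit of `k` the coefficients satisfy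
`sup |aₘ| ≤ (|w_b| + |w_f|) sup |aₘ|`; the supremum is finite by Cauchy's estimate, hence zero.
-/

/-- The open unit disc in `ℂ`. -/
def openUnitDisc : Set ℂ := {z : ℂ | ‖z‖ < 1}

/-- `f` is a solution of the Collatz functional equation for `(k, wb, wf)`:
it is analytic and bounded on the open unit disc and satisfies the functional equation
`2 f(x²) = wb (f(x) + f(−x)) + wf x² (f(x⁶) − f(−x⁶)) + 2 x^(2k)` there. -/
def IsSolution (k : ℕ) (wb wf : ℝ) (f : ℂ → ℂ) : Prop :=
  AnalyticOnNhd ℂ f openUnitDisc ∧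
  (∃ C : ℝ, ∀ z ∈ openUnitDisc, ‖f z‖ ≤ C) ∧
  ∀ x : ℂ, ‖x‖ < 1 →
    2 * f (x ^ 2) =
      (wb : ℂ) * (f x + f (-x)) + (wf : ℂ) * x ^ 2 * (f (x ^ 6) - f (-x ^ 6)) +
        2 * x ^ (2 * k)

/-- `a` is the sequence of Taylor coefficients of `f` at `0`:
`f x = Σ aₙ xⁿ` on the open unit disc. -/
def HasCoeffs (f : ℂ → ℂ) (a : ℕ → ℂ) : Prop :=
  ∀ x : ℂ, ‖x‖ < 1 → HasSum (fun n => a n * x ^ n) (f x)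

/-- The Collatz map: `3n+1` on odd numbers, `n/2` on even numbers. -/
def Col (n : ℕ) : ℕ := if n % 2 = 1 then 3 * n + 1 else n / 2

open Filter Topology Metric

section EvenOddParts

variable {R : Type*} [CommRing R] [TopologicalSpace R] [IsTopologicalRing R]
  {a : ℕ → R} {x s t : R}

theorem hasSum_even_part (hs : HasSum (fun n => a n * x ^ n) s)
    (ht : HasSum (fun n => a n * (-x) ^ n) t) :
    HasSum (fun i => 2 * (a (2 * i) * x ^ (2 * i))) (s + t) := by
  have hinj : Function.Injective (fun i : ℕ => 2 * i) := fun i j (h : 2 * i = 2 * j) => by omega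
  have hodd : ∀ n ∉ Set.range (fun i : ℕ => 2 * i), a n * x ^ n + a n * (-x) ^ n = 0 := by
    intro n hn
    have hodd : Odd n := Nat.not_even_iff_odd.mp fun ⟨i, hi⟩ => hn ⟨i, by simp only; omega⟩
    rw [hodd.neg_pow]
    ring
  convert (hinj.hasSum_iff hodd).mpr (hs.add ht) using 1
  ext i
  simp only [Function.comp_apply, (even_two_mul i).neg_pow]
  ring

theorem hasSum_odd_part (hs : HasSum (fun n => a n * x ^ n) s)
    (ht : HasSum (fun n => a n * (-x) ^ n) t) :
    HasSum (fun i => 2 * (a (2 * i + 1) * x ^ (2 * i + 1))) (s - t) := by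
  have hinj : Function.Injective (fun i : ℕ => 2 * i + 1) :=
    fun i j (h : 2 * i + 1 = 2 * j + 1) => by omega
  have heven : ∀ n ∉ Set.range (fun i : ℕ => 2 * i + 1), a n * x ^ n - a n * (-x) ^ n = 0 := by
    intro n hn
    have heven : Even n := Nat.not_odd_iff_even.mp fun ⟨i, hi⟩ => hn ⟨i, hi.symm⟩
    rw [heven.neg_pow]
    ring
  convert (hinj.hasSum_iff heven).mpr (hs.sub ht) using 1
  ext i
  simp only [Function.comp_apply, Odd.neg_pow (⟨i, rfl⟩ : Odd (2 * i + 1))]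
  ring

theorem hasSum_sq_mul_odd_part_pow_six (hs : HasSum (fun n => a n * (x ^ 6) ^ n) s)
    (ht : HasSum (fun n => a n * (-x ^ 6) ^ n) t) :
    HasSum (fun n => 2 * ((if n % 6 = 4 then a ((n - 1) / 3) else 0) * (x ^ 2) ^ n))
      (x ^ 2 * (s - t)) := by
  have hinj : Function.Injective (fun i : ℕ => 6 * i + 4) :=
    fun i j (h : 6 * i + 4 = 6 * j + 4) => by omega
  have hzero : ∀ n ∉ Set.range (fun i : ℕ => 6 * i + 4),
      2 * ((if n % 6 = 4 then a ((n - 1) / 3) else 0) * (x ^ 2) ^ n) = 0 := by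
    intro n hn
    rw [if_neg fun h4 => hn ⟨n / 6, by simp only; omega⟩]
    ring
  refine (hinj.hasSum_iff hzero).mp (((hasSum_odd_part hs ht).mul_left (x ^ 2)).congr_fun ?_)
  intro i
  have hi : (6 * i + 4 - 1) / 3 = 2 * i + 1 := by omega
  simp only [Function.comp_apply, Nat.mul_add_mod_self_left, hi, if_true]
  ring

end EvenOddParts

theorem openUnitDisc_eq_ball : openUnitDisc = ball 0 1 := by
  ext z
  simp [openUnitDisc]

theorem exists_sq_eq_of_norm_lt_one {y : ℂ} (hy : ‖y‖ < 1) : ∃ x : ℂ, ‖x‖ < 1 ∧ x ^ 2 = y := by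
  obtain ⟨x, hx⟩ := IsAlgClosed.exists_pow_nat_eq y two_pos
  refine ⟨x, (pow_lt_one_iff_of_nonneg (norm_nonneg x) two_ne_zero).mp ?_, hx⟩
  rwa [← norm_pow, hx]

namespace HasCoeffs

variable {f : ℂ → ℂ} {a : ℕ → ℂ}

theorem hasFPowerSeriesOnBall (ha : HasCoeffs f a) :
    HasFPowerSeriesOnBall f (FormalMultilinearSeries.ofScalars ℂ a) 0 1 where
  r_le := by
    refine ENNReal.le_of_forall_nnreal_lt fun r hr => ?_
    have hr' : ‖(r : ℂ)‖ < 1 := by simpa using hr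
    refine FormalMultilinearSeries.le_radius_of_tendsto _ (l := 0) ?_
    simpa [FormalMultilinearSeries.ofScalars_norm] using
      (ha _ hr').summable.tendsto_atTop_zero.norm
  r_pos := zero_lt_one
  hasSum {y} hy := by
    have hy' : ‖y‖ < 1 := by simpa [← ofReal_norm] using hy
    simpa [FormalMultilinearSeries.ofScalars_apply_eq, mul_comm] using ha y hy'

theorem unique {b : ℕ → ℂ} (ha : HasCoeffs f a) (hb : HasCoeffs f b) : a = b :=
  FormalMultilinearSeries.ofScalars_series_injective ℂ ℂ <|
    ha.hasFPowerSeriesOnBall.hasFPowerSeriesAt.eq_formalMultilinearSeries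
      hb.hasFPowerSeriesOnBall.hasFPowerSeriesAt

theorem iteratedDeriv_eq (ha : HasCoeffs f a) (n : ℕ) :
    iteratedDeriv n f 0 = n.factorial * a n := by
  rw [iteratedDeriv_eq_iteratedFDeriv, ← ha.hasFPowerSeriesOnBall.factorial_smul 1 n,
    FormalMultilinearSeries.ofScalars_apply_eq]
  simp

/-- Cauchy's estimate on the circles of radius `r < 1`, in the limit `r → 1`. -/
theorem norm_le {C : ℝ} (ha : HasCoeffs f a) (hd : DifferentiableOn ℂ f openUnitDisc)
    (hC : ∀ z ∈ openUnitDisc, ‖f z‖ ≤ C) (n : ℕ) : ‖a n‖ ≤ C := by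
  rw [openUnitDisc_eq_ball] at hd hC
  have hr : ∀ r ∈ Set.Ioo (0 : ℝ) 1, ‖a n‖ ≤ C / r ^ n := by
    rintro r ⟨hr0, hr1⟩
    have hcauchy := Complex.norm_iteratedDeriv_le_of_forall_mem_sphere_norm_le n hr0
      (hd.diffContOnCl_ball (closedBall_subset_ball hr1)) fun z hz =>
        hC z (sphere_subset_ball hr1 hz)
    rw [ha.iteratedDeriv_eq, norm_mul, Complex.norm_natCast, mul_div_assoc] at hcauchy
    exact le_of_mul_le_mul_left hcauchy (by positivity)
  have hlim : Tendsto (fun r : ℝ => C / r ^ n) (𝓝[<] 1) (𝓝 C) := by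
    have h : Tendsto (fun r : ℝ => C / r ^ n) (𝓝 1) (𝓝 (C / 1 ^ n)) :=
      tendsto_const_nhds.div ((continuous_pow n).tendsto 1) (by simp)
    simpa using h.mono_left nhdsWithin_le_nhds
  exact ge_of_tendsto hlim (Filter.mem_of_superset (Ioo_mem_nhdsLT zero_lt_one) hr)

end HasCoeffs

/-- Comparing the coefficients of `x^(2n)` in the functional equation. -/
theorem IsSolution.coeff_eq {k : ℕ} {wb wf : ℝ} {f : ℂ → ℂ} {a : ℕ → ℂ}
    (hf : IsSolution k wb wf f) (ha : HasCoeffs f a) (n : ℕ) :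
    a n = wb * a (2 * n) + wf * (if n % 6 = 4 then a ((n - 1) / 3) else 0) +
      if n = k then 1 else 0 := by
  revert n
  rw [← funext_iff]
  refine ha.unique fun y hy => ?_
  obtain ⟨x, hx, rfl⟩ := exists_sq_eq_of_norm_lt_one hy
  have hx6 : ‖x ^ 6‖ < 1 := by simpa using pow_lt_one₀ (norm_nonneg x) hx (by norm_num)
  have heven := (hasSum_even_part (ha x hx) (ha (-x) (by simpa using hx))).mul_left (wb : ℂ)
  have hodd := (hasSum_sq_mul_odd_part_pow_six (ha _ hx6) (ha _ (by simpa using hx6))).mul_left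
    (wf : ℂ)
  have hk := hasSum_ite_eq k (2 * (x ^ 2) ^ k)
  rw [← hasSum_mul_left_iff (two_ne_zero' ℂ), hf.2.2 x hx, pow_mul, mul_assoc (wf : ℂ)]
  refine ((heven.add hodd).add hk).congr_fun fun n => ?_
  rw [← pow_mul]
  split_ifs <;> subst_vars <;> ring

theorem Col_two_mul (m : ℕ) : Col (2 * m) = m := by
  unfold Col
  rw [if_neg (by omega)]
  omega

theorem Col_sub_one_div_three {m : ℕ} (hm : m % 6 = 4) : Col ((m - 1) / 3) = m := by
  unfold Col
  rw [if_pos (by omega)]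
  omega

def collatzOrbit (k : ℕ) : Set ℕ := {m | ∃ i, Col^[i] k = m}

theorem Col_mem_collatzOrbit {k p : ℕ} (hp : p ∈ collatzOrbit k) : Col p ∈ collatzOrbit k :=
  let ⟨i, hi⟩ := hp
  ⟨i + 1, by rw [Function.iterate_succ_apply', hi]⟩

theorem le_zero_of_forall_bound_le_mul {ι : Type*} {S : Set ι} {u : ι → ℝ} {q C : ℝ}
    (hq : |q| < 1) (hC : ∀ m ∈ S, u m ≤ C)
    (hstep : ∀ B, (∀ m ∈ S, u m ≤ B) → ∀ m ∈ S, u m ≤ q * B) : ∀ m ∈ S, u m ≤ 0 := by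
  have hpow : ∀ j : ℕ, ∀ m ∈ S, u m ≤ q ^ j * C := by
    intro j
    induction j with
    | zero => simpa using hC
    | succ j ih => simpa [pow_succ', mul_assoc] using hstep _ ih
  intro m hm
  have hlim : Tendsto (fun j : ℕ => q ^ j * C) atTop (𝓝 0) := by
    simpa using (tendsto_pow_atTop_nhds_zero_of_abs_lt_one hq).mul_const C
  exact ge_of_tendsto hlim (Eventually.of_forall fun j => hpow j m hm)

theorem IsSolution.norm_coeff_le_of_notMem_collatzOrbit {k : ℕ} {wb wf : ℝ} {f : ℂ → ℂ}
    {a : ℕ → ℂ} (hf : IsSolution k wb wf f) (ha : HasCoeffs f a) {B : ℝ}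
    (hB : ∀ m ∈ (collatzOrbit k)ᶜ, ‖a m‖ ≤ B) {m : ℕ} (hm : m ∈ (collatzOrbit k)ᶜ) :
    ‖a m‖ ≤ (|wb| + |wf|) * B := by
  have hB0 : 0 ≤ B := (norm_nonneg _).trans (hB m hm)
  have hdouble : ‖a (2 * m)‖ ≤ B :=
    hB _ fun h => hm (Col_two_mul m ▸ Col_mem_collatzOrbit h)
  set third := if m % 6 = 4 then a ((m - 1) / 3) else 0 with hthird_def
  have hthird : ‖third‖ ≤ B := by
    rw [hthird_def]
    split_ifs with h4
    · exact hB _ fun h => hm (Col_sub_one_div_three h4 ▸ Col_mem_collatzOrbit h)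
    · simpa using hB0
  have hmk : m ≠ k := fun h => hm ⟨0, h.symm⟩
  calc ‖a m‖ = ‖(wb : ℂ) * a (2 * m) + wf * third‖ := by
        rw [hf.coeff_eq ha m, if_neg hmk, add_zero]
    _ ≤ ‖(wb : ℂ) * a (2 * m)‖ + ‖(wf : ℂ) * third‖ := norm_add_le _ _
    _ = |wb| * ‖a (2 * m)‖ + |wf| * ‖third‖ := by
        simp only [norm_mul, Complex.norm_real, Real.norm_eq_abs]
    _ ≤ (|wb| + |wf|) * B := by rw [add_mul]; gcongr

theorem stmt_11_general (k : ℕ) (wb wf : ℝ) (f : ℂ → ℂ) (a : ℕ → ℂ)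
    (hw : |wb| + |wf| < 1)
    (hf : IsSolution k wb wf f) (ha : HasCoeffs f a)
    (n : ℕ) (hne : a n ≠ 0) :
    ∃ i : ℕ, Col^[i] k = n := by
  obtain ⟨C, hC⟩ := hf.2.1
  have hq : |(|wb| + |wf|)| < 1 := by rwa [abs_of_nonneg (by positivity)]
  by_contra hn
  have hle := le_zero_of_forall_bound_le_mul (u := fun m : ℕ => ‖a m‖) hq
    (fun m _ => ha.norm_le hf.1.differentiableOn hC m)
    (fun B hB m hm => hf.norm_coeff_le_of_notMem_collatzOrbit ha hB hm) n hn
  exact hne (norm_le_zero_iff.mp hle)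

theorem stmt_11 (k : ℕ) (wb wf : ℝ) (f : ℂ → ℂ) (a : ℕ → ℂ) (hk : 0 < k)
    (hw : |wb| + |wf| < 1)
    (hf : IsSolution k wb wf f) (ha : HasCoeffs f a)
    (n : ℕ) (hn : 0 < n) (hne : a n ≠ 0) :
    ∃ i : ℕ, Col^[i] k = n :=
  stmt_11_general k wb wf f a hw hf ha n hne
end

section
/- Assume k ≥ 5, and let f be a solution of the Collatz functional equation for (k, w_b, w_f) with coefficients (aₙ). Then (1 − w_b²·w_f)·a₁ = w_b³·a₈. -/
open Function FormalMultilinearSeries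

section PowerSeries

variable {𝕜 : Type*} [NontriviallyNormedField 𝕜]

theorem hasFPowerSeriesOnBall_ofScalars {c : ℕ → 𝕜} {g : 𝕜 → 𝕜} {x₀ : 𝕜} (hx₀ : x₀ ≠ 0)
    (hc : ∀ x : 𝕜, ‖x‖ ≤ ‖x₀‖ → HasSum (fun n => c n * x ^ n) (g x)) :
    HasFPowerSeriesOnBall g (ofScalars 𝕜 c) 0 ‖x₀‖₊ where
  r_le := by
    refine (ofScalars 𝕜 c).le_radius_of_tendsto (l := 0) ?_
    have := ((hc x₀ le_rfl).summable.tendsto_atTop_zero).norm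
    simpa [ofScalars_norm, norm_mul, norm_pow] using this
  r_pos := by simpa using hx₀
  hasSum {y} hy := by
    rw [Metric.mem_eball, edist_zero_right, enorm_eq_nnnorm, ENNReal.coe_lt_coe] at hy
    simpa [ofScalars_apply_eq, mul_comm] using hc y hy.le

theorem coeff_eq_of_hasSum_pow {r : ℝ} (hr : 0 < r) {c d : ℕ → 𝕜} {g : 𝕜 → 𝕜}
    (hc : ∀ x : 𝕜, ‖x‖ < r → HasSum (fun n => c n * x ^ n) (g x))
    (hd : ∀ x : 𝕜, ‖x‖ < r → HasSum (fun n => d n * x ^ n) (g x)) : c = d := by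
  obtain ⟨x₀, hx₀, hx₀r⟩ := NormedField.exists_norm_lt 𝕜 hr
  have hx₀' : x₀ ≠ 0 := norm_pos_iff.mp hx₀
  have hc₀ := hasFPowerSeriesOnBall_ofScalars hx₀' fun x hx => hc x (hx.trans_lt hx₀r)
  have hd₀ := hasFPowerSeriesOnBall_ofScalars hx₀' fun x hx => hd x (hx.trans_lt hx₀r)
  exact ofScalars_series_injective 𝕜 𝕜
    (hc₀.hasFPowerSeriesAt.eq_formalMultilinearSeries hd₀.hasFPowerSeriesAt)

theorem HasSum.extend_mul_pow {g : ℕ → ℕ} (hg : Injective g) {b : ℕ → 𝕜} {x s : 𝕜}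
    (h : HasSum (fun n => b n * x ^ g n) s) :
    HasSum (fun m => extend g b 0 m * x ^ m) s := by
  refine (hg.hasSum_iff fun m hm => ?_).mp ?_
  · simp [extend_apply' _ _ _ hm]
  · simpa [comp_def, hg.extend_apply] using h

end PowerSeries

namespace HasCoeffs

variable {f : ℂ → ℂ} {a : ℕ → ℂ}

theorem hasSum_add_comp_neg (ha : HasCoeffs f a) {x : ℂ} (hx : ‖x‖ < 1) :
    HasSum (fun n => (1 + (-1) ^ n) * a n * x ^ n) (f x + f (-x)) :=
  ((ha x hx).add (ha (-x) (by rwa [norm_neg]))).congr_fun fun n => by rw [neg_pow]; ring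

theorem hasSum_sub_comp_neg (ha : HasCoeffs f a) {x : ℂ} (hx : ‖x‖ < 1) :
    HasSum (fun n => (1 - (-1) ^ n) * a n * x ^ n) (f x - f (-x)) :=
  ((ha x hx).sub (ha (-x) (by rwa [norm_neg]))).congr_fun fun n => by rw [neg_pow]; ring

end HasCoeffs

namespace IsSolution

variable {k : ℕ} {wb wf : ℝ} {f : ℂ → ℂ} {a : ℕ → ℂ}

theorem coeff_eq_s14 (hf : IsSolution k wb wf f) (ha : HasCoeffs f a) (m : ℕ) :
    extend (2 * ·) (fun n => 2 * a n) 0 m =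
      wb * (1 + (-1) ^ m) * a m + extend (6 * · + 2) (fun n => wf * (1 - (-1) ^ n) * a n) 0 m
        + if m = 2 * k then 2 else 0 := by
  have hpow {x : ℂ} (hx : ‖x‖ < 1) (n : ℕ) (hn : n ≠ 0) : ‖x ^ n‖ < 1 := by
    rw [norm_pow]; exact pow_lt_one₀ (norm_nonneg x) hx hn
  revert m
  rw [← funext_iff]
  refine coeff_eq_of_hasSum_pow one_pos (g := fun x => 2 * f (x ^ 2))
    (fun x hx => ?_) (fun x hx => ?_)
  · refine HasSum.extend_mul_pow (mul_right_injective₀ two_ne_zero) ?_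
    exact ((ha _ (hpow hx 2 two_ne_zero)).mul_left 2).congr_fun fun n => by rw [pow_mul]; ring
  · have hfx := (ha.hasSum_add_comp_neg hx).mul_left (wb : ℂ)
    have hfx6 := HasSum.extend_mul_pow (g := (6 * · + 2)) (b := fun n => wf * (1 - (-1) ^ n) * a n)
      (x := x) (fun p q h => by simpa using h) <|
      ((ha.hasSum_sub_comp_neg (hpow hx 6 (by norm_num))).mul_left ((wf : ℂ) * x ^ 2)).congr_fun
        fun n => by rw [pow_add, pow_mul]; ring
    have hx2k := hasSum_ite_eq (2 * k) ((2 : ℂ) * x ^ (2 * k))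
    rw [hf.2.2 x hx]
    refine ((hfx.add hfx6).add hx2k).congr_fun fun n => ?_
    split_ifs with hn
    · subst hn; ring
    · ring

theorem coeff_three_mul_add_one
    (hf : IsSolution k wb wf f) (ha : HasCoeffs f a) {n : ℕ} (hn : 3 * n + 1 ≠ k) :
    2 * a (3 * n + 1) = 2 * wb * a (6 * n + 2) + wf * (1 - (-1) ^ n) * a n := by
  have h := hf.coeff_eq_s14 ha (6 * n + 2)
  rw [(by intro p q h; simpa using h : Injective (6 * · + 2)).extend_apply] at h
  rw [show 6 * n + 2 = 2 * (3 * n + 1) by ring] at h ⊢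
  rw [(mul_right_injective₀ two_ne_zero).extend_apply, if_neg (by omega), pow_mul, neg_one_sq,
    one_pow] at h
  linear_combination h

theorem coeff_of_mod_three_ne_one
    (hf : IsSolution k wb wf f) (ha : HasCoeffs f a) {m : ℕ} (hm : m % 3 ≠ 1) (hmk : m ≠ k) :
    a m = wb * a (2 * m) := by
  have h := hf.coeff_eq_s14 ha (2 * m)
  rw [(mul_right_injective₀ two_ne_zero).extend_apply,
    extend_apply' _ _ _ (by rintro ⟨n, hn⟩; omega),
    Pi.zero_apply, if_neg (by omega), pow_mul, neg_one_sq, one_pow] at h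
  linear_combination h / 2

end IsSolution

theorem stmt_14 (k : ℕ) (wb wf : ℝ) (f : ℂ → ℂ) (a : ℕ → ℂ) (hk : 5 ≤ k)
    (hf : IsSolution k wb wf f) (ha : HasCoeffs f a) :
    (1 - (wb : ℂ) ^ 2 * (wf : ℂ)) * a 1 = (wb : ℂ) ^ 3 * a 8 := by
  have h1 := hf.coeff_three_mul_add_one ha (n := 0) (by omega)
  have h2 := hf.coeff_of_mod_three_ne_one ha (m := 2) (by norm_num) (by omega)
  have h4 := hf.coeff_three_mul_add_one ha (n := 1) (by omega)
  norm_num at h1 h2 h4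
  linear_combination (wb : ℂ) ^ 2 / 2 * h4 + wb * h2 + h1 / 2
end
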